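/- A vector π ∈ ℝ^N belongs to the core 𝒞(N,V_w) if and only if (π, 0) are valid discounts and raises and, for every coalition S ⊆ N, every optimal allocation under the original bids remains optimal after every agent i ∈ S discounts its bid by π_i (i.e., 𝒳*(b) ⊆ 𝒳*(b'), where b'_i is b_i discounted by π_i for i ∈ S and b'_i = b_i for i ∉ S). -/

import Mathlib

open Finset

variable {X N : Type*}

/-- `x` is an optimal allocation for the bid profile `b`. -/
def Optimal [Fintype N] (b : N → X → ℝ) (x : X) : Prop :=
  ∀ y : X, ∑ i, b i y ≤ ∑ i, b i x

/-- Agent `i` is winning: it wins in some optimal allocation. -/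
def Winning [Fintype N] (v b : N → X → ℝ) (i : N) : Prop :=
  ∃ x, Optimal b x ∧ 0 < v i x

/-- Agent `i` is losing: it loses in some optimal allocation. -/
def Losing [Fintype N] (v b : N → X → ℝ) (i : N) : Prop :=
  ∃ x, Optimal b x ∧ ¬ 0 < v i x

/-- The bid `b` discounted by `π`. -/
def Disc (b : X → ℝ) (π : ℝ) : X → ℝ := fun x => max (b x - π) 0

/-- `c` is a raised bid of `b` (with valuation `v`) with raise `μ`. -/
def IsRaised (v b : X → ℝ) (μ : ℝ) (c : X → ℝ) : Prop :=
  (∀ x, 0 < b x → c x = b x + μ) ∧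
  (∀ x, b x = 0 → 0 ≤ c x ∧ c x ≤ μ) ∧
  (∀ x, ¬ 0 < v x → c x = 0)

/-- The coalitional value `V_w(S)`: the maximum over allocations of the total bid of `S`. -/
def Vw [Fintype X] [Nonempty X] (b : N → X → ℝ) (S : Finset N) : ℝ :=
  Finset.univ.sup' Finset.univ_nonempty fun x => ∑ i ∈ S, b i x

/-- `r` is the coalitional value `V_ℓ(S)`: the maximum total bid over allocations in which
every agent outside `S` wins. -/
def VlVal [Fintype N] (v b : N → X → ℝ) (S : Finset N) (r : ℝ) : Prop :=
  IsGreatest {r : ℝ | ∃ x : X, (∀ i, i ∉ S → 0 < v i x) ∧ r = ∑ i, b i x} r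

/-- `r` is the bicooperative coalitional value `V(S,T)`: the maximum of the total bid of
`S ∪ T` over allocations in which every agent of `T` wins. -/
def VVal [DecidableEq N] (v b : N → X → ℝ) (S T : Finset N) (r : ℝ) : Prop :=
  IsGreatest {r : ℝ | ∃ x : X, (∀ i ∈ T, 0 < v i x) ∧ r = ∑ i ∈ S ∪ T, b i x} r

/-- `π`, `μ` are valid discounts and raises. -/
def Valid [Fintype N] (v b : N → X → ℝ) (π μ : N → ℝ) : Prop :=
  (∀ i, 0 ≤ π i) ∧ (∀ i, 0 ≤ μ i) ∧
  (∀ i, Winning v b i → μ i = 0 ∧ ∀ x, Optimal b x → π i ≤ b i x) ∧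
  (∀ i, Losing v b i → π i = 0)

/-- Agent-free-disposal. -/
def AFD [Fintype N] [DecidableEq N] (v : N → X → ℝ) : Prop :=
  ∀ b' : N → X → ℝ, (∀ i x, 0 ≤ b' i x ∧ b' i x ≤ v i x) →
    ∀ S : Finset N, ∀ x : X, ∃ x' : X,
      (∑ i ∈ univ \ S, b' i x ≤ ∑ i ∈ univ \ S, b' i x') ∧ ∀ i ∈ S, ¬ 0 < v i x'

/-- The core `𝒞(N, V_w)`. -/
def CoreW [Fintype X] [Nonempty X] [Fintype N] [DecidableEq N]
    (b : N → X → ℝ) (π : N → ℝ) : Prop :=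
  (∀ i, 0 ≤ π i) ∧ ∀ S : Finset N, ∑ i ∈ S, π i ≤ Vw b univ - Vw b (univ \ S)

/-- The core `𝒞(N, V_ℓ)`. -/
def CoreL [Fintype N] [DecidableEq N] (v b : N → X → ℝ) (μ : N → ℝ) : Prop :=
  (∀ i, 0 ≤ μ i) ∧ ∀ (S : Finset N) (rN rS : ℝ),
    VlVal v b univ rN → VlVal v b (univ \ S) rS → ∑ i ∈ S, μ i ≤ rN - rS

/-- The bicore `𝒞₂(N, V)`. -/
def Bicore [Fintype N] [DecidableEq N] (v b : N → X → ℝ) (π μ : N → ℝ) : Prop :=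
  (∀ i, 0 ≤ π i) ∧ (∀ i, 0 ≤ μ i) ∧
  ∀ (S T : Finset N) (rN r : ℝ),
    VVal v b univ ∅ rN → VVal v b (univ \ S) T r →
      ∑ i ∈ S, π i + ∑ j ∈ T, μ j ≤ rN - r

/-!
The discounted welfare at an allocation `y` equals `∑_{N ∖ T} b(y) - ∑_{S ∖ T} π`, where `T`
are the agents of `S` priced out at `y`. A core vector never prices anyone out at an optimal
allocation `x` (take `S = {i}` in the core inequality), so there the discounted welfare is
`V_w(N) - ∑_S π`, and the core inequality for `T` bounds the welfare at every `y` by this.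
Conversely, if `x` stays optimal after `S` discounts, comparing with an allocation attaining
`V_w(N ∖ S)` gives the core inequality for `S`.
-/

lemma Valid.le_of_optimal [Fintype N] {v b : N → X → ℝ} {π μ : N → ℝ} (hb : ∀ i x, 0 ≤ b i x)
    (hval : Valid v b π μ) {x : X} (hx : Optimal b x) (i : N) : π i ≤ b i x := by
  by_cases hwin : 0 < v i x
  · exact (hval.2.2.1 i ⟨x, hx, hwin⟩).2 x hx
  · rw [hval.2.2.2 i ⟨x, hx, hwin⟩]
    exact hb i x

section

variable [DecidableEq N]

def discountOn (S : Finset N) (b : N → X → ℝ) (π : N → ℝ) : N → X → ℝ :=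
  fun i => if i ∈ S then Disc (b i) (π i) else b i

lemma eq_discountOn {S : Finset N} {b b' : N → X → ℝ} {π : N → ℝ}
    (hS : ∀ i ∈ S, b' i = Disc (b i) (π i)) (hSc : ∀ i ∉ S, b' i = b i) :
    b' = discountOn S b π := by
  funext i
  by_cases hi : i ∈ S <;> simp [discountOn, hi, hS, hSc]

noncomputable def pricedOut (S : Finset N) (b : N → X → ℝ) (π : N → ℝ) (y : X) : Finset N :=
  S.filter fun i => b i y < π i

variable [Fintype N]

lemma sum_discountOn_eq (S : Finset N) (b : N → X → ℝ) (π : N → ℝ) (y : X) :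
    ∑ i, discountOn S b π i y =
      ∑ i ∈ univ \ pricedOut S b π y, b i y - ∑ i ∈ S \ pricedOut S b π y, π i := by
  set T := pricedOut S b π y
  have hpoint : ∀ i, discountOn S b π i y =
      (if i ∈ univ \ T then b i y else 0) - (if i ∈ S \ T then π i else 0) := by
    intro i
    by_cases hiS : i ∈ S
    · by_cases hlt : b i y < π i
      · simp [discountOn, Disc, T, pricedOut, hiS, hlt, hlt.le]
      · simp [discountOn, Disc, T, pricedOut, hiS, hlt, not_lt.1 hlt]
    · simp [discountOn, T, pricedOut, hiS]
  rw [sum_congr rfl fun i _ => hpoint i, sum_sub_distrib, sum_ite_mem, sum_ite_mem,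
    univ_inter, univ_inter]

lemma sum_discountOn_of_le {S : Finset N} {b : N → X → ℝ} {π : N → ℝ} {x : X}
    (hle : ∀ i ∈ S, π i ≤ b i x) :
    ∑ i, discountOn S b π i x = ∑ i, b i x - ∑ i ∈ S, π i := by
  have hnone : pricedOut S b π x = ∅ := filter_false_of_mem fun i hi => not_lt.2 (hle i hi)
  rw [sum_discountOn_eq, hnone, sdiff_empty, sdiff_empty]

lemma sum_compl_le_sum_discountOn (S : Finset N) (b : N → X → ℝ) (π : N → ℝ) (y : X) :
    ∑ i ∈ univ \ S, b i y ≤ ∑ i, discountOn S b π i y := by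
  rw [← sum_sdiff (subset_univ S)]
  have hcompl : ∑ i ∈ univ \ S, discountOn S b π i y = ∑ i ∈ univ \ S, b i y :=
    sum_congr rfl fun i hi => by simp [discountOn, (mem_sdiff.1 hi).2]
  have hS : 0 ≤ ∑ i ∈ S, discountOn S b π i y :=
    sum_nonneg fun i hi => by simp [discountOn, Disc, hi]
  linarith

end

section

variable [Fintype X] [Nonempty X]

lemma sum_le_Vw (b : N → X → ℝ) (S : Finset N) (x : X) : ∑ i ∈ S, b i x ≤ Vw b S :=
  le_sup' (fun x => ∑ i ∈ S, b i x) (mem_univ x)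

lemma exists_eq_Vw (b : N → X → ℝ) (S : Finset N) : ∃ x, Vw b S = ∑ i ∈ S, b i x := by
  obtain ⟨x, -, hx⟩ := exists_mem_eq_sup' univ_nonempty fun x => ∑ i ∈ S, b i x
  exact ⟨x, hx⟩

variable [Fintype N]

lemma exists_optimal (b : N → X → ℝ) : ∃ x, Optimal b x := by
  obtain ⟨x, hx⟩ := exists_eq_Vw b univ
  exact ⟨x, fun y => hx ▸ sum_le_Vw b univ y⟩

lemma Optimal.Vw_univ_eq {b : N → X → ℝ} {x : X} (hx : Optimal b x) :
    Vw b univ = ∑ i, b i x := by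
  obtain ⟨y, hy⟩ := exists_eq_Vw b univ
  exact le_antisymm (hy ▸ hx y) (sum_le_Vw b univ x)

variable [DecidableEq N]

lemma CoreW.le_of_optimal {b : N → X → ℝ} {π : N → ℝ} (h : CoreW b π) {x : X}
    (hx : Optimal b x) (i : N) : π i ≤ b i x := by
  have hcore := h.2 {i}
  have hcompl : ∑ j ∈ univ \ {i}, b j x = ∑ j, b j x - b i x := by
    rw [sum_sdiff_eq_sub (subset_univ _), sum_singleton]
  rw [sum_singleton, hx.Vw_univ_eq] at hcore
  linarith [sum_le_Vw b (univ \ {i}) x]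

lemma CoreW.valid {v b : N → X → ℝ} {π : N → ℝ} (hb : ∀ i x, 0 ≤ b i x ∧ b i x ≤ v i x)
    (h : CoreW b π) : Valid v b π fun _ => 0 := by
  refine ⟨h.1, fun _ => le_rfl, fun i _ => ⟨rfl, fun x hx => h.le_of_optimal hx i⟩, ?_⟩
  rintro i ⟨x, hx, hlose⟩
  linarith [h.le_of_optimal hx i, h.1 i, (hb i x).2, not_lt.1 hlose]

lemma CoreW.optimal_discountOn {b : N → X → ℝ} {π : N → ℝ} (h : CoreW b π) {x : X}
    (hx : Optimal b x) (S : Finset N) : Optimal (discountOn S b π) x := by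
  intro y
  have hcore := h.2 (pricedOut S b π y)
  have hsplit := sum_sdiff (s₁ := pricedOut S b π y) (filter_subset _ S) (f := π)
  rw [sum_discountOn_eq, sum_discountOn_of_le fun i _ => h.le_of_optimal hx i,
    ← hx.Vw_univ_eq]
  linarith [sum_le_Vw b (univ \ pricedOut S b π y) y]

lemma coreW_of_optimal_discountOn {v b : N → X → ℝ} {π μ : N → ℝ} (hb : ∀ i x, 0 ≤ b i x)
    (hval : Valid v b π μ)
    (hpres : ∀ (S : Finset N) (x : X), Optimal b x → Optimal (discountOn S b π) x) :
    CoreW b π := by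
  refine ⟨hval.1, fun S => ?_⟩
  obtain ⟨x, hx⟩ := exists_optimal b
  obtain ⟨y, hy⟩ := exists_eq_Vw b (univ \ S)
  have hdisc := sum_discountOn_of_le (S := S) fun i _ => hval.le_of_optimal hb hx i
  rw [hy, hx.Vw_univ_eq]
  linarith [sum_compl_le_sum_discountOn S b π y, hpres S x hx y]

end

theorem stmt4_general [Fintype X] [Nonempty X] [Fintype N] [DecidableEq N]
    (v b : N → X → ℝ)
    (hb : ∀ i x, 0 ≤ b i x ∧ b i x ≤ v i x)
    (π : N → ℝ) :
    CoreW b π ↔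
      (Valid v b π (fun _ => 0) ∧
        ∀ S : Finset N, ∀ b' : N → X → ℝ,
          (∀ i ∈ S, b' i = Disc (b i) (π i)) → (∀ i ∉ S, b' i = b i) →
            ∀ x, Optimal b x → Optimal b' x) := by
  constructor
  · intro h
    refine ⟨h.valid hb, fun S b' hS hSc x hx => ?_⟩
    rw [eq_discountOn hS hSc]
    exact h.optimal_discountOn hx S
  · rintro ⟨hval, hpres⟩
    refine coreW_of_optimal_discountOn (fun i x => (hb i x).1) hval fun S x hx => ?_
    exact hpres S _ (fun i hi => by simp [discountOn, hi]) (fun i hi => by simp [discountOn, hi])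
      x hx

/-- `π ∈ 𝒞(N, V_w)` iff `(π, 0)` are valid discounts and raises and, for every
coalition `S`, every optimal allocation remains optimal after every agent `i ∈ S` discounts
its bid by `π i`. -/
theorem stmt4 [Fintype X] [Nonempty X] [Fintype N] [Nonempty N] [DecidableEq N]
    (v b : N → X → ℝ)
    (hb : ∀ i x, 0 ≤ b i x ∧ b i x ≤ v i x)
    (hsupp : ∀ i, ∃ x, 0 < v i x)
    (hafd : AFD v)
    (π : N → ℝ) :
    CoreW b π ↔
      (Valid v b π (fun _ => 0) ∧
        ∀ S : Finset N, ∀ b' : N → X → ℝ,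
          (∀ i ∈ S, b' i = Disc (b i) (π i)) → (∀ i ∉ S, b' i = b i) →
            ∀ x, Optimal b x → Optimal b' x) :=
  stmt4_general v b hb π
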